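/- Let u be smooth on ℝ^{1+3} supported in Λ'. For any multi-index I with |I| ≥ 1 consisting of fields from {∂_α, H_a}, if the product Z^I contains at least one translation ∂_α, then ∫_{H_s} |(s/t) Z^I u|² dx ≤ C Σ_{|J| ≤ |I|−1, β} ∫_{H_s} |(s/t) ∂_β Z^J u|² dx; if Z^I consists only of boosts H_a then ∫_{H_s} |t^{-1} Z^I u|² dx ≤ C Σ_{|J| ≤ |I|−1, b} ∫_{H_s} |∂̄_b Z^J u|² dx; in either case ∫_{H_s} |t^{-1} Z^I u|² dx ≤ C Σ_{|J| ≤ |I|−1} E_m(s, Z^J u). -/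

import Mathlib

open MeasureTheory

/-- Partial derivative in direction `α` on `ℝ^{1+3}` (coordinate 0 is time). -/
noncomputable def pd (α : Fin 4) (u : (Fin 4 → ℝ) → ℝ) : (Fin 4 → ℝ) → ℝ :=
  fun p => fderiv ℝ u p (Pi.single α 1)

/-- Lorentz boost `H_a = x^a ∂_t + t ∂_a`. -/
noncomputable def boost (a : Fin 3) (u : (Fin 4 → ℝ) → ℝ) : (Fin 4 → ℝ) → ℝ :=
  fun p => p a.succ * pd 0 u p + p 0 * pd a.succ u p

/-- Hyperboloidal derivative `∂̄_a = t⁻¹ H_a`. -/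
noncomputable def dbar (a : Fin 3) (u : (Fin 4 → ℝ) → ℝ) : (Fin 4 → ℝ) → ℝ :=
  fun p => (p a.succ / p 0) * pd 0 u p + pd a.succ u p

/-- The family: `Z_0,…,Z_3 = ∂_0,…,∂_3` (translations) and `Z_4,Z_5,Z_6 = H_1,H_2,H_3`. -/
noncomputable def Zf (i : Fin 7) (u : (Fin 4 → ℝ) → ℝ) : (Fin 4 → ℝ) → ℝ :=
  if h : (i : ℕ) < 4 then pd ⟨i, h⟩ u
  else boost ⟨(i : ℕ) - 4, by have := i.isLt; omega⟩ u

/-- Iterated product `Z^I`. -/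
noncomputable def ZIter (I : List (Fin 7)) (u : (Fin 4 → ℝ) → ℝ) : (Fin 4 → ℝ) → ℝ :=
  I.foldr Zf u

/-- The point of the hyperboloid `H_s` over `x`. -/
noncomputable def hypPt (s : ℝ) (x : Fin 3 → ℝ) : Fin 4 → ℝ :=
  Fin.cons (Real.sqrt (s ^ 2 + ∑ a : Fin 3, (x a) ^ 2)) x

/-- Hyperboloidal energy `E_m(s,v) = ∫_{H_s} [2D²v² + Σ_a (∂̄_a v)² + ((s/t)∂_t v)²] dx`. -/
noncomputable def EmD (D s : ℝ) (v : (Fin 4 → ℝ) → ℝ) : ℝ :=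
  ∫ x : Fin 3 → ℝ,
    (2 * D ^ 2 * (v (hypPt s x)) ^ 2 + (∑ a : Fin 3, (dbar a v (hypPt s x)) ^ 2)
      + ((s / hypPt s x 0) * pd 0 v (hypPt s x)) ^ 2)

lemma contDiff_pd {u : (Fin 4 → ℝ) → ℝ} (hu : ContDiff ℝ (⊤ : ℕ∞) u) (α : Fin 4) :
    ContDiff ℝ (⊤ : ℕ∞) (pd α u) :=
  (hu.fderiv_right (by simp)).clm_apply contDiff_const

lemma contDiff_boost {u : (Fin 4 → ℝ) → ℝ} (hu : ContDiff ℝ (⊤ : ℕ∞) u) (a : Fin 3) :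
    ContDiff ℝ (⊤ : ℕ∞) (boost a u) := by
  unfold boost
  exact (((ContinuousLinearMap.proj a.succ : ((Fin 4 → ℝ)) →L[ℝ] ℝ).contDiff).mul
      (contDiff_pd hu 0)).add
    (((ContinuousLinearMap.proj 0 : ((Fin 4 → ℝ)) →L[ℝ] ℝ).contDiff).mul
      (contDiff_pd hu a.succ))

lemma contDiff_Zf {u : (Fin 4 → ℝ) → ℝ} (hu : ContDiff ℝ (⊤ : ℕ∞) u) (i : Fin 7) :
    ContDiff ℝ (⊤ : ℕ∞) (Zf i u) := by
  unfold Zf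
  split
  · exact contDiff_pd hu _
  · exact contDiff_boost hu _

lemma contDiff_ZIter {u : (Fin 4 → ℝ) → ℝ} (hu : ContDiff ℝ (⊤ : ℕ∞) u) (I : List (Fin 7)) :
    ContDiff ℝ (⊤ : ℕ∞) (ZIter I u) := by
  induction I with
  | nil => exact hu
  | cons i I' ih => exact contDiff_Zf ih i

lemma ZIter_cons (i : Fin 7) (I : List (Fin 7)) (u : (Fin 4 → ℝ) → ℝ) :
    ZIter (i :: I) u = Zf i (ZIter I u) := rfl

lemma pd_finsum {N : ℕ} (γ : Fin 4) (f : Fin N → (Fin 4 → ℝ) → ℝ)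
    (hf : ∀ k, ContDiff ℝ (⊤ : ℕ∞) (f k)) (c : Fin N → ℝ) (p : Fin 4 → ℝ) :
    pd γ (fun q => ∑ k, c k * f k q) p = ∑ k, c k * pd γ (f k) p := by
  have hdiff : ∀ k : Fin N, DifferentiableAt ℝ (f k) p :=
    fun k => ((hf k).differentiable (by simp)) p
  show fderiv ℝ (fun q => ∑ k, c k * f k q) p (Pi.single γ 1) = _
  rw [fderiv_fun_sum (fun k _ => (hdiff k).const_mul (c k))]
  rw [ContinuousLinearMap.sum_apply]
  refine Finset.sum_congr rfl fun k _ => ?_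
  rw [fderiv_const_mul (hdiff k)]
  simp [pd]

lemma boost_finsum {N : ℕ} (a : Fin 3) (f : Fin N → (Fin 4 → ℝ) → ℝ)
    (hf : ∀ k, ContDiff ℝ (⊤ : ℕ∞) (f k)) (c : Fin N → ℝ) (p : Fin 4 → ℝ) :
    boost a (fun q => ∑ k, c k * f k q) p = ∑ k, c k * boost a (f k) p := by
  unfold boost
  rw [pd_finsum 0 f hf c p, pd_finsum a.succ f hf c p, Finset.mul_sum, Finset.mul_sum,
    ← Finset.sum_add_distrib]
  exact Finset.sum_congr rfl fun k _ => by ring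

lemma pd_pd_comm {u : (Fin 4 → ℝ) → ℝ} (hu : ContDiff ℝ (⊤ : ℕ∞) u) (β γ : Fin 4) (p : Fin 4 → ℝ) :
    pd β (pd γ u) p = pd γ (pd β u) p := by
  have hder : ContDiff ℝ (⊤ : ℕ∞) (fderiv ℝ u) := hu.fderiv_right (by simp)
  have hdiff : DifferentiableAt ℝ (fderiv ℝ u) p :=
    (hder.differentiable (by simp)) p
  have hsym : IsSymmSndFDerivAt ℝ u p :=
    hu.contDiffAt.isSymmSndFDerivAt (by rw [minSmoothness_of_isRCLikeNormedField]; exact WithTop.coe_le_coe.2 (le_top : (2:ℕ∞) ≤ ⊤))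
  have key : ∀ δ ε : Fin 4, pd δ (pd ε u) p
      = fderiv ℝ (fderiv ℝ u) p (Pi.single δ 1) (Pi.single ε 1) := by
    intro δ ε
    have : pd ε u = fun q => (fderiv ℝ u q) (Pi.single ε 1) := rfl
    rw [show pd δ (pd ε u) p
        = fderiv ℝ (fun q => (fderiv ℝ u q) (Pi.single ε 1)) p (Pi.single δ 1) from rfl,
      fderiv_clm_apply hdiff (differentiableAt_const _)]
    simp
  rw [key, key, hsym]

lemma hasFDerivAt_coord (i : Fin 4) (p : Fin 4 → ℝ) :
    HasFDerivAt (fun q : Fin 4 → ℝ => q i)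
      (ContinuousLinearMap.proj i : (Fin 4 → ℝ) →L[ℝ] ℝ) p :=
  (ContinuousLinearMap.proj i : (Fin 4 → ℝ) →L[ℝ] ℝ).hasFDerivAt

lemma pd_boost_comm {u : (Fin 4 → ℝ) → ℝ} (hu : ContDiff ℝ (⊤ : ℕ∞) u) (a : Fin 3) (β : Fin 4)
    (p : Fin 4 → ℝ) :
    pd β (boost a u) p = boost a (pd β u) p
      + (Pi.single β (1:ℝ) : Fin 4 → ℝ) a.succ * pd 0 u p + (Pi.single β (1:ℝ) : Fin 4 → ℝ) 0 * pd a.succ u p := by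
  have hd : ∀ γ : Fin 4, DifferentiableAt ℝ (pd γ u) p := fun γ =>
    ((contDiff_pd hu γ).differentiable (by simp)) p
  have hfd := (((hasFDerivAt_coord a.succ p).mul' (hd 0).hasFDerivAt).add
    ((hasFDerivAt_coord 0 p).mul' (hd a.succ).hasFDerivAt)).fderiv
  have hb : pd β (boost a u) p
      = fderiv ℝ (fun q => q a.succ * pd 0 u q + q 0 * pd a.succ u q) p (Pi.single β 1) := rfl
  rw [hb, show (fun q : Fin 4 → ℝ => q a.succ * pd 0 u q + q 0 * pd a.succ u q)
      = ((fun q : Fin 4 → ℝ => q a.succ) * pd 0 u + (fun q : Fin 4 → ℝ => q 0) * pd a.succ u) from rfl, hfd]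
  simp only [ContinuousLinearMap.add_apply, ContinuousLinearMap.coe_smul', Pi.smul_apply,
    ContinuousLinearMap.smulRight_apply, ContinuousLinearMap.proj_apply, smul_eq_mul, op_smul_eq_mul]
  have c1 : fderiv ℝ (pd 0 u) p (Pi.single β 1) = pd β (pd 0 u) p := rfl
  have c2 : fderiv ℝ (pd a.succ u) p (Pi.single β 1) = pd β (pd a.succ u) p := rfl
  rw [c1, c2, pd_pd_comm hu β 0, pd_pd_comm hu β a.succ]
  unfold boost
  ring

lemma rep_of_translation : ∀ (I : List (Fin 7)), (∃ i ∈ I, (i:ℕ) < 4) →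
    ∃ (N : ℕ) (c : Fin N → ℝ) (β : Fin N → Fin 4) (J : Fin N → List (Fin 7)),
      (∀ k, (J k).length + 1 ≤ I.length) ∧
      ∀ u : (Fin 4 → ℝ) → ℝ, ContDiff ℝ (⊤ : ℕ∞) u → ∀ p,
        ZIter I u p = ∑ k, c k * pd (β k) (ZIter (J k) u) p := by
  intro I
  induction I with
  | nil => rintro ⟨i, hi, -⟩; simp at hi
  | cons i I' ih =>
    rintro ⟨j, hj, hjlt⟩
    by_cases h : (i:ℕ) < 4
    · refine ⟨1, fun _ => 1, fun _ => ⟨(i:ℕ), h⟩, fun _ => I', fun k => by simp, ?_⟩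
      intro u hu p
      simp [Fin.sum_univ_one, ZIter_cons, Zf, h]
    · have hj' : ∃ j ∈ I', (j:ℕ) < 4 := by
        rcases List.mem_cons.1 hj with rfl | hmem
        · exact absurd hjlt h
        · exact ⟨j, hmem, hjlt⟩
      obtain ⟨N, c, β, J, hlen, hrep⟩ := ih hj'
      set a : Fin 3 := ⟨(i:ℕ) - 4, by have := i.isLt; omega⟩ with ha
      refine ⟨N + (N + N),
        Fin.addCases c (Fin.addCases
          (fun k => -(c k * (Pi.single (β k) (1:ℝ) : Fin 4 → ℝ) a.succ))
          (fun k => -(c k * (Pi.single (β k) (1:ℝ) : Fin 4 → ℝ) 0))),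
        Fin.addCases β (Fin.addCases (fun _ => 0) (fun _ => a.succ)),
        Fin.addCases (fun k => i :: J k) (Fin.addCases J J), ?_, ?_⟩
      · intro k
        refine Fin.addCases (fun k1 => ?_) (fun k2 => ?_) k
        · simp only [Fin.addCases_left, List.length_cons]
          exact Nat.succ_le_succ (hlen k1)
        · refine Fin.addCases (fun k3 => ?_) (fun k4 => ?_) k2
          · simp only [Fin.addCases_right, Fin.addCases_left]
            exact le_trans (hlen k3) (Nat.le_succ _)
          · simp only [Fin.addCases_right, Fin.addCases_left]
            exact le_trans (hlen k4) (Nat.le_succ _)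
      · intro u hu p
        have hw : ∀ k, ContDiff ℝ (⊤ : ℕ∞) (ZIter (J k) u) := fun k => contDiff_ZIter hu (J k)
        have hZi : ∀ v, Zf i v = boost a v := fun v => dif_neg h
        have e1 : ZIter (i :: I') u p = boost a (ZIter I' u) p := by rw [ZIter_cons, hZi]
        have e2 : ZIter I' u = fun q => ∑ k, c k * pd (β k) (ZIter (J k) u) q :=
          funext (hrep u hu)
        rw [e1, e2, boost_finsum a _ (fun k => contDiff_pd (hw k) (β k)) c p,
          Fin.sum_univ_add, Fin.sum_univ_add]
        simp only [Fin.addCases_left, Fin.addCases_right]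
        have comm : ∀ k, boost a (pd (β k) (ZIter (J k) u)) p
            = pd (β k) (ZIter (i :: J k) u) p
              - (Pi.single (β k) (1:ℝ) : Fin 4 → ℝ) a.succ * pd 0 (ZIter (J k) u) p
              - (Pi.single (β k) (1:ℝ) : Fin 4 → ℝ) 0 * pd a.succ (ZIter (J k) u) p := by
          intro k
          have hc := pd_boost_comm (hw k) a (β k) p
          rw [ZIter_cons, hZi]
          linarith [hc]
        simp only [comm, mul_sub, neg_mul, Finset.sum_sub_distrib, Finset.sum_neg_distrib]
        ring

def Uset : Set (Fin 4 → ℝ) := {p | p 0 - 1 < Real.sqrt (∑ a : Fin 3, (p a.succ) ^ 2)}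

lemma isOpen_Uset : IsOpen Uset := by
  apply isOpen_lt
  · exact (continuous_apply 0).sub continuous_const
  · exact Real.continuous_sqrt.comp (by fun_prop)

lemma vanish_pd {v : (Fin 4 → ℝ) → ℝ} (hv : ∀ p ∈ Uset, v p = 0) (α : Fin 4) :
    ∀ p ∈ Uset, pd α v p = 0 := by
  intro p hp
  have hev : v =ᶠ[nhds p] (fun _ => (0:ℝ)) :=
    Filter.eventually_of_mem (isOpen_Uset.mem_nhds hp) hv
  show fderiv ℝ v p (Pi.single α 1) = 0
  rw [hev.fderiv_eq, fderiv_fun_const]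
  simp

lemma vanish_Zf {v : (Fin 4 → ℝ) → ℝ} (hv : ∀ p ∈ Uset, v p = 0) (i : Fin 7) :
    ∀ p ∈ Uset, Zf i v p = 0 := by
  intro p hp
  unfold Zf
  split
  · exact vanish_pd hv _ p hp
  · unfold boost
    rw [vanish_pd hv 0 p hp, vanish_pd hv _ p hp]
    ring

lemma vanish_ZIter {u : (Fin 4 → ℝ) → ℝ} (hu : ∀ p ∈ Uset, u p = 0) (I : List (Fin 7)) :
    ∀ p ∈ Uset, ZIter I u p = 0 := by
  induction I with
  | nil => exact hu
  | cons i I' ih => exact vanish_Zf ih i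

lemma hypPt_zero (s : ℝ) (x : Fin 3 → ℝ) :
    hypPt s x 0 = Real.sqrt (s ^ 2 + ∑ a : Fin 3, (x a) ^ 2) := rfl

lemma hypPt_succ (s : ℝ) (x : Fin 3 → ℝ) (a : Fin 3) : hypPt s x a.succ = x a := by
  simp [hypPt]

lemma hypPt_zero_pos {s : ℝ} (hs : 0 < s) (x : Fin 3 → ℝ) : 0 < hypPt s x 0 := by
  rw [hypPt_zero]
  apply Real.sqrt_pos.2
  have : (0:ℝ) ≤ ∑ a : Fin 3, (x a)^2 := Finset.sum_nonneg fun a _ => sq_nonneg _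
  nlinarith

lemma hypPt_zero_ge {s : ℝ} (hs : 0 ≤ s) (x : Fin 3 → ℝ) : s ≤ hypPt s x 0 := by
  rw [hypPt_zero]
  have : (0:ℝ) ≤ ∑ a : Fin 3, (x a)^2 := Finset.sum_nonneg fun a _ => sq_nonneg _
  nlinarith [Real.sq_sqrt (by nlinarith : (0:ℝ) ≤ s^2 + ∑ a : Fin 3, (x a)^2),
    Real.sqrt_nonneg (s^2 + ∑ a : Fin 3, (x a)^2), sq_nonneg (Real.sqrt (s^2 + ∑ a : Fin 3, (x a)^2) - s)]

lemma mem_Uset_of {s : ℝ} (x : Fin 3 → ℝ)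
    (hx : s ^ 2 < 2 * Real.sqrt (∑ a : Fin 3, (x a) ^ 2) + 1) : hypPt s x ∈ Uset := by
  have h1 : ∀ a : Fin 3, hypPt s x a.succ = x a := hypPt_succ s x
  show hypPt s x 0 - 1 < Real.sqrt (∑ a : Fin 3, (hypPt s x a.succ) ^ 2)
  simp only [h1]
  rw [hypPt_zero]
  set r := Real.sqrt (∑ a : Fin 3, (x a) ^ 2) with hr
  have hr0 : 0 ≤ r := Real.sqrt_nonneg _
  have hrsq : r ^ 2 = ∑ a : Fin 3, (x a) ^ 2 :=
    Real.sq_sqrt (Finset.sum_nonneg fun a _ => sq_nonneg _)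
  have : Real.sqrt (s ^ 2 + ∑ a : Fin 3, (x a) ^ 2) < r + 1 := by
    rw [show s ^ 2 + ∑ a : Fin 3, (x a) ^ 2 = s^2 + r^2 by rw [hrsq]]
    have h2 : s^2 + r^2 < (r+1)^2 := by nlinarith
    calc Real.sqrt (s^2 + r^2) < Real.sqrt ((r+1)^2) := by
          apply Real.sqrt_lt_sqrt (by positivity) h2
      _ = r + 1 := Real.sqrt_sq (by linarith)
  linarith

lemma continuous_hypPt (s : ℝ) : Continuous (hypPt s) := by
  refine continuous_pi fun i => ?_
  refine Fin.cases ?_ (fun a => ?_) i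
  · simp only [hypPt_zero]
    exact Real.continuous_sqrt.comp (by fun_prop)
  · simp only [hypPt_succ]
    exact continuous_apply a

lemma continuous_t (s : ℝ) : Continuous (fun x : Fin 3 → ℝ => hypPt s x 0) :=
  (continuous_apply 0).comp (continuous_hypPt s)

lemma t_ne_zero {s : ℝ} (hs : 0 < s) (x : Fin 3 → ℝ) : hypPt s x 0 ≠ 0 :=
  ne_of_gt (hypPt_zero_pos hs x)

lemma compactSupport_of {s : ℝ} {F : (Fin 3 → ℝ) → ℝ}
    (hF0 : ∀ x, hypPt s x ∈ Uset → F x = 0) : HasCompactSupport F := by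
  apply HasCompactSupport.intro (K := Metric.closedBall 0 (max 0 ((s^2 - 1)/2)))
    (isCompact_closedBall _ _)
  intro x hx
  apply hF0
  apply mem_Uset_of
  rw [Metric.mem_closedBall, dist_zero_right] at hx
  push_neg at hx
  have hle : ‖x‖ ≤ Real.sqrt (∑ a : Fin 3, (x a) ^ 2) := by
    apply pi_norm_le_iff_of_nonneg (Real.sqrt_nonneg _) |>.2
    intro a
    rw [Real.norm_eq_abs, ← Real.sqrt_sq_eq_abs]
    apply Real.sqrt_le_sqrt
    exact Finset.single_le_sum (fun b _ => sq_nonneg (x b)) (Finset.mem_univ a)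
  have := lt_of_lt_of_le hx hle
  have h2 : (s^2-1)/2 < Real.sqrt (∑ a : Fin 3, (x a) ^ 2) :=
    lt_of_le_of_lt (le_max_right _ _) this
  linarith

lemma integrable_sq_of {s : ℝ} {F : (Fin 3 → ℝ) → ℝ} (hF : Continuous F)
    (hF0 : ∀ x, hypPt s x ∈ Uset → F x = 0) :
    Integrable (fun x : Fin 3 → ℝ => F x ^ 2) :=
  Continuous.integrable_of_hasCompactSupport (hF.pow 2)
    ((compactSupport_of hF0).comp_left (g := fun y : ℝ => y ^ 2) (by simp))

set_option maxHeartbeats 1000000 in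
lemma part1_aux (m : ℕ) (I : Fin (m+1) → Fin 7) :
    ∃ C > (0:ℝ), ∀ u : (Fin 4 → ℝ) → ℝ, ContDiff ℝ (⊤ : ℕ∞) u → (∀ p ∈ Uset, u p = 0) →
      ∀ s : ℝ, 0 < s → (∃ k, ((I k : ℕ) < 4)) →
      (∫ x : Fin 3 → ℝ, ((s / hypPt s x 0) * ZIter (List.ofFn I) u (hypPt s x)) ^ 2)
        ≤ C * ∑ m' ∈ Finset.range (m + 1), ∑ J : Fin m' → Fin 7, ∑ β : Fin 4,
            ∫ x : Fin 3 → ℝ,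
              ((s / hypPt s x 0) * pd β (ZIter (List.ofFn J) u) (hypPt s x)) ^ 2 := by
  by_cases hI : ∃ k, ((I k : ℕ) < 4)
  swap
  · exact ⟨1, one_pos, fun u _ _ s _ hk => absurd hk hI⟩
  obtain ⟨k0, hk0⟩ := hI
  obtain ⟨N, c, β, J, hlen, hrep⟩ := rep_of_translation (List.ofFn I)
    ⟨I k0, List.mem_ofFn.2 ⟨k0, rfl⟩, hk0⟩
  refine ⟨(N : ℝ) * ∑ k, (c k)^2 + 1, by positivity, ?_⟩
  intro u hu hu0 s hs _
  set R := ∑ m' ∈ Finset.range (m + 1), ∑ J' : Fin m' → Fin 7, ∑ β' : Fin 4,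
      ∫ x : Fin 3 → ℝ,
        ((s / hypPt s x 0) * pd β' (ZIter (List.ofFn J') u) (hypPt s x)) ^ 2 with hR
  have hRnn : 0 ≤ R := by
    refine Finset.sum_nonneg fun m' _ => Finset.sum_nonneg fun J' _ =>
      Finset.sum_nonneg fun β' _ => integral_nonneg fun x => sq_nonneg _
  -- the component functions
  set F : Fin N → (Fin 3 → ℝ) → ℝ :=
    fun k x => c k * ((s / hypPt s x 0) * pd (β k) (ZIter (J k) u) (hypPt s x)) with hF
  have hFcont : ∀ k, Continuous (F k) := by
    intro k
    apply continuous_const.mul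
    exact (continuous_const.div (continuous_t s) (fun x => t_ne_zero hs x)).mul
      ((contDiff_pd (contDiff_ZIter hu (J k)) (β k)).continuous.comp (continuous_hypPt s))
  have hF0 : ∀ k x, hypPt s x ∈ Uset → F k x = 0 := by
    intro k x hx
    simp only [hF, vanish_pd (vanish_ZIter hu0 (J k)) (β k) _ hx, mul_zero]
  have hFint : ∀ k : Fin N, Integrable (fun x => F k x ^ 2) :=
    fun k => integrable_sq_of (hFcont k) (hF0 k)
  -- pointwise bound
  have hpt : ∀ x : Fin 3 → ℝ,
      ((s / hypPt s x 0) * ZIter (List.ofFn I) u (hypPt s x)) ^ 2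
        ≤ (N : ℝ) * ∑ k, F k x ^ 2 := by
    intro x
    have hsum : (s / hypPt s x 0) * ZIter (List.ofFn I) u (hypPt s x) = ∑ k, F k x := by
      rw [hrep u hu (hypPt s x), Finset.mul_sum]
      exact Finset.sum_congr rfl fun k _ => by simp only [hF]; ring
    rw [hsum]
    simpa using sq_sum_le_card_mul_sum_sq (s := (Finset.univ : Finset (Fin N)))
      (f := fun k => F k x)
  -- integrate
  have hint : (∫ x : Fin 3 → ℝ, ((s / hypPt s x 0) * ZIter (List.ofFn I) u (hypPt s x)) ^ 2)
      ≤ ∫ x : Fin 3 → ℝ, (N : ℝ) * ∑ k, F k x ^ 2 := by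
    apply integral_mono_of_nonneg (Filter.Eventually.of_forall fun x => sq_nonneg _)
    · exact (integrable_finset_sum _ fun k _ => hFint k).const_mul _
    · exact Filter.Eventually.of_forall hpt
  have hsplit : (∫ x : Fin 3 → ℝ, (N : ℝ) * ∑ k, F k x ^ 2)
      = (N : ℝ) * ∑ k, ∫ x : Fin 3 → ℝ, F k x ^ 2 := by
    rw [integral_const_mul, integral_finset_sum _ fun k _ => hFint k]
  -- each piece is a term of R
  have hterm : ∀ k : Fin N, (∫ x : Fin 3 → ℝ,
      ((s / hypPt s x 0) * pd (β k) (ZIter (J k) u) (hypPt s x)) ^ 2) ≤ R := by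
    intro k
    have hlenk : (J k).length < m + 1 := by
      have := hlen k
      rw [List.length_ofFn] at this
      omega
    have hJk : List.ofFn (J k).get = J k := List.ofFn_get _
    calc (∫ x : Fin 3 → ℝ, ((s / hypPt s x 0) * pd (β k) (ZIter (J k) u) (hypPt s x)) ^ 2)
        = ∫ x : Fin 3 → ℝ,
            ((s / hypPt s x 0) * pd (β k) (ZIter (List.ofFn (J k).get) u) (hypPt s x)) ^ 2 := by
          rw [hJk]
      _ ≤ ∑ β' : Fin 4, ∫ x : Fin 3 → ℝ,
            ((s / hypPt s x 0) * pd β' (ZIter (List.ofFn (J k).get) u) (hypPt s x)) ^ 2 :=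
          Finset.single_le_sum (f := fun β' : Fin 4 => ∫ x : Fin 3 → ℝ,
              ((s / hypPt s x 0) * pd β' (ZIter (List.ofFn (J k).get) u) (hypPt s x)) ^ 2)
            (fun β' _ => integral_nonneg fun x => sq_nonneg _)
            (Finset.mem_univ (β k))
      _ ≤ ∑ J' : Fin (J k).length → Fin 7, ∑ β' : Fin 4, ∫ x : Fin 3 → ℝ,
            ((s / hypPt s x 0) * pd β' (ZIter (List.ofFn J') u) (hypPt s x)) ^ 2 :=
          Finset.single_le_sum (f := fun J' : Fin (J k).length → Fin 7 =>
              ∑ β' : Fin 4, ∫ x : Fin 3 → ℝ,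
                ((s / hypPt s x 0) * pd β' (ZIter (List.ofFn J') u) (hypPt s x)) ^ 2)
            (fun J' _ => Finset.sum_nonneg fun β' _ =>
              integral_nonneg fun x => sq_nonneg _) (Finset.mem_univ ((J k).get))
      _ ≤ R := by
          rw [hR]
          exact Finset.single_le_sum (f := fun m' => ∑ J' : Fin m' → Fin 7, ∑ β' : Fin 4,
            ∫ x : Fin 3 → ℝ,
              ((s / hypPt s x 0) * pd β' (ZIter (List.ofFn J') u) (hypPt s x)) ^ 2)
            (fun m' _ => Finset.sum_nonneg fun J' _ => Finset.sum_nonneg fun β' _ =>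
              integral_nonneg fun x => sq_nonneg _) (Finset.mem_range.2 hlenk)
  have hFR : ∀ k : Fin N, (∫ x : Fin 3 → ℝ, F k x ^ 2) ≤ (c k)^2 * R := by
    intro k
    have : (fun x => F k x ^ 2)
        = fun x => (c k)^2 * ((s / hypPt s x 0) * pd (β k) (ZIter (J k) u) (hypPt s x)) ^ 2 := by
      funext x; simp only [hF]; ring
    rw [this, integral_const_mul]
    exact mul_le_mul_of_nonneg_left (hterm k) (sq_nonneg _)
  calc (∫ x : Fin 3 → ℝ, ((s / hypPt s x 0) * ZIter (List.ofFn I) u (hypPt s x)) ^ 2)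
      ≤ (N : ℝ) * ∑ k, ∫ x : Fin 3 → ℝ, F k x ^ 2 := by rw [← hsplit]; exact hint
    _ ≤ (N : ℝ) * ∑ k, (c k)^2 * R := by
        apply mul_le_mul_of_nonneg_left _ (Nat.cast_nonneg N)
        exact Finset.sum_le_sum fun k _ => hFR k
    _ = ((N : ℝ) * ∑ k, (c k)^2) * R := by rw [← Finset.sum_mul]; ring
    _ ≤ ((N : ℝ) * ∑ k, (c k)^2 + 1) * R := by nlinarith

lemma vanish_dbar {v : (Fin 4 → ℝ) → ℝ} (hv : ∀ p ∈ Uset, v p = 0) (b : Fin 3) :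
    ∀ p ∈ Uset, dbar b v p = 0 := by
  intro p hp
  unfold dbar
  rw [vanish_pd hv 0 p hp, vanish_pd hv b.succ p hp]
  ring

lemma continuous_dbar_comp {v : (Fin 4 → ℝ) → ℝ} (hv : ContDiff ℝ (⊤ : ℕ∞) v) {s : ℝ} (hs : 0 < s)
    (b : Fin 3) : Continuous fun x : Fin 3 → ℝ => dbar b v (hypPt s x) := by
  show Continuous fun x : Fin 3 → ℝ =>
    (hypPt s x b.succ / hypPt s x 0) * pd 0 v (hypPt s x) + pd b.succ v (hypPt s x)
  exact ((((continuous_apply b.succ).comp (continuous_hypPt s)).div (continuous_t s)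
      (fun x => t_ne_zero hs x)).mul
      ((contDiff_pd hv 0).continuous.comp (continuous_hypPt s))).add
    ((contDiff_pd hv b.succ).continuous.comp (continuous_hypPt s))

set_option maxHeartbeats 1000000 in
lemma part2_aux (m : ℕ) (I : Fin (m+1) → Fin 7) (u : (Fin 4 → ℝ) → ℝ)
    (s : ℝ) (hs : 0 < s) (hall : ∀ k, 4 ≤ (I k : ℕ)) :
    (∫ x : Fin 3 → ℝ, ((hypPt s x 0)⁻¹ * ZIter (List.ofFn I) u (hypPt s x)) ^ 2)
      ≤ ∑ m' ∈ Finset.range (m + 1), ∑ J : Fin m' → Fin 7, ∑ b : Fin 3,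
          ∫ x : Fin 3 → ℝ, (dbar b (ZIter (List.ofFn J) u) (hypPt s x)) ^ 2 := by
  have h0 : ¬ ((I 0 : ℕ) < 4) := by have := hall 0; omega
  set v := ZIter (List.ofFn fun k : Fin m => I k.succ) u with hv
  set a : Fin 3 := ⟨(I 0 : ℕ) - 4, by have := (I 0).isLt; omega⟩ with ha2
  have hofn : ZIter (List.ofFn I) u = Zf (I 0) v := by rw [List.ofFn_succ]; rfl
  have hZ : Zf (I 0) v = boost a v := dif_neg h0
  have heq : ∀ x : Fin 3 → ℝ,
      ((hypPt s x 0)⁻¹ * ZIter (List.ofFn I) u (hypPt s x)) ^ 2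
        = (dbar a v (hypPt s x)) ^ 2 := by
    intro x
    rw [hofn, hZ]
    have hp : hypPt s x 0 ≠ 0 := t_ne_zero hs x
    show ((hypPt s x 0)⁻¹ * boost a v (hypPt s x)) ^ 2 = _
    unfold boost dbar
    field_simp
  simp only [heq]
  calc (∫ x : Fin 3 → ℝ, (dbar a v (hypPt s x)) ^ 2)
      ≤ ∑ b : Fin 3, ∫ x : Fin 3 → ℝ, (dbar b v (hypPt s x)) ^ 2 :=
        Finset.single_le_sum (f := fun b : Fin 3 =>
            ∫ x : Fin 3 → ℝ, (dbar b v (hypPt s x)) ^ 2)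
          (fun b _ => integral_nonneg fun x => sq_nonneg _) (Finset.mem_univ a)
    _ ≤ ∑ J : Fin m → Fin 7, ∑ b : Fin 3,
          ∫ x : Fin 3 → ℝ, (dbar b (ZIter (List.ofFn J) u) (hypPt s x)) ^ 2 :=
        Finset.single_le_sum (f := fun J : Fin m → Fin 7 => ∑ b : Fin 3,
            ∫ x : Fin 3 → ℝ, (dbar b (ZIter (List.ofFn J) u) (hypPt s x)) ^ 2)
          (fun J _ => Finset.sum_nonneg fun b _ => integral_nonneg fun x => sq_nonneg _)
          (Finset.mem_univ (fun k : Fin m => I k.succ))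
    _ ≤ _ :=
        Finset.single_le_sum (f := fun m' => ∑ J : Fin m' → Fin 7, ∑ b : Fin 3,
            ∫ x : Fin 3 → ℝ, (dbar b (ZIter (List.ofFn J) u) (hypPt s x)) ^ 2)
          (fun m' _ => Finset.sum_nonneg fun J _ => Finset.sum_nonneg fun b _ =>
            integral_nonneg fun x => sq_nonneg _)
          (Finset.mem_range.2 (Nat.lt_succ_self m))

lemma EmD_nonneg (D s : ℝ) (v : (Fin 4 → ℝ) → ℝ) : 0 ≤ EmD D s v := by
  apply integral_nonneg
  intro x
  have h1 : (0:ℝ) ≤ 2 * D ^ 2 * (v (hypPt s x)) ^ 2 := by positivity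
  have h2 : (0:ℝ) ≤ ∑ a : Fin 3, (dbar a v (hypPt s x)) ^ 2 :=
    Finset.sum_nonneg fun a _ => sq_nonneg _
  have h3 : (0:ℝ) ≤ ((s / hypPt s x 0) * pd 0 v (hypPt s x)) ^ 2 := sq_nonneg _
  show (0:ℝ) ≤ _
  linarith

set_option maxHeartbeats 1000000 in
lemma part3_aux (m : ℕ) (I : Fin (m+1) → Fin 7) (u : (Fin 4 → ℝ) → ℝ)
    (hu : ContDiff ℝ (⊤ : ℕ∞) u) (hu0 : ∀ p ∈ Uset, u p = 0)
    (s : ℝ) (hs : 0 < s) (D : ℝ) :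
    (∫ x : Fin 3 → ℝ, ((hypPt s x 0)⁻¹ * ZIter (List.ofFn I) u (hypPt s x)) ^ 2)
      ≤ 2 * ∑ m' ∈ Finset.range (m + 1), ∑ J : Fin m' → Fin 7,
          EmD D s (ZIter (List.ofFn J) u) := by
  set v := ZIter (List.ofFn fun k : Fin m => I k.succ) u with hv
  have hvsm : ContDiff ℝ (⊤ : ℕ∞) v := contDiff_ZIter hu _
  have hv0 : ∀ p ∈ Uset, v p = 0 := vanish_ZIter hu0 _
  have hofn : ZIter (List.ofFn I) u = Zf (I 0) v := by rw [List.ofFn_succ]; rfl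
  set E : (Fin 3 → ℝ) → ℝ := fun x =>
    2 * D ^ 2 * (v (hypPt s x)) ^ 2 + (∑ a : Fin 3, (dbar a v (hypPt s x)) ^ 2)
      + ((s / hypPt s x 0) * pd 0 v (hypPt s x)) ^ 2 with hE
  have hEm : EmD D s v = ∫ x : Fin 3 → ℝ, E x := rfl
  have hEint : Integrable E := by
    have p1 : Integrable (fun x : Fin 3 → ℝ => 2 * D ^ 2 * (v (hypPt s x)) ^ 2) := by
      apply Integrable.const_mul
      exact integrable_sq_of (hvsm.continuous.comp (continuous_hypPt s))
        (fun x hx => hv0 _ hx)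
    have p2 : Integrable (fun x : Fin 3 → ℝ => ∑ a : Fin 3, (dbar a v (hypPt s x)) ^ 2) := by
      apply integrable_finset_sum
      intro b _
      exact integrable_sq_of (continuous_dbar_comp hvsm hs b)
        (fun x hx => vanish_dbar hv0 b _ hx)
    have p3 : Integrable (fun x : Fin 3 → ℝ =>
        ((s / hypPt s x 0) * pd 0 v (hypPt s x)) ^ 2) := by
      apply integrable_sq_of
      · exact (continuous_const.div (continuous_t s) (fun x => t_ne_zero hs x)).mul
          ((contDiff_pd hvsm 0).continuous.comp (continuous_hypPt s))
      · intro x hx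
        rw [vanish_pd hv0 0 _ hx, mul_zero]
    exact (p1.add p2).add p3
  have hpt : ∀ x : Fin 3 → ℝ,
      ((hypPt s x 0)⁻¹ * ZIter (List.ofFn I) u (hypPt s x)) ^ 2 ≤ 2 * E x := by
    intro x
    have hq1 : (0:ℝ) ≤ 2 * D ^ 2 * (v (hypPt s x)) ^ 2 := by positivity
    have hq2 : (0:ℝ) ≤ ∑ a : Fin 3, (dbar a v (hypPt s x)) ^ 2 :=
      Finset.sum_nonneg fun a _ => sq_nonneg _
    have hq3 : (0:ℝ) ≤ ((s / hypPt s x 0) * pd 0 v (hypPt s x)) ^ 2 := sq_nonneg _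
    by_cases hc : ((I 0 : ℕ) < 4)
    · have hZ : Zf (I 0) v = pd ⟨(I 0 : ℕ), hc⟩ v := dif_pos hc
      rw [hofn, hZ]
      by_cases hx : s ^ 2 < 2 * Real.sqrt (∑ a : Fin 3, (x a) ^ 2) + 1
      · have hmem := mem_Uset_of x hx
        rw [vanish_pd hv0 _ _ hmem, mul_zero]
        simp only [hE]
        nlinarith
      · push_neg at hx
        have hr0 : 0 ≤ Real.sqrt (∑ a : Fin 3, (x a) ^ 2) := Real.sqrt_nonneg _
        have hs1 : 1 ≤ s := by nlinarith
        set T := hypPt s x 0 with hT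
        have hTs : s ≤ T := hypPt_zero_ge hs.le x
        have hT1 : 1 ≤ T := le_trans hs1 hTs
        have hT0 : 0 < T := lt_of_lt_of_le hs hTs
        have hT2 : T ^ 2 = s ^ 2 + ∑ a : Fin 3, (x a) ^ 2 := by
          rw [hT, hypPt_zero]
          exact Real.sq_sqrt (by positivity)
        rcases Fin.eq_zero_or_eq_succ (⟨(I 0 : ℕ), hc⟩ : Fin 4) with hβ | ⟨b, hβ⟩
        · rw [hβ]
          set P := pd 0 v (hypPt s x) with hP
          have e1 : (T⁻¹ * P) ^ 2 = P ^ 2 / T ^ 2 := by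
            field_simp
          have e2 : ((s / T) * P) ^ 2 = s ^ 2 * P ^ 2 / T ^ 2 := by
            rw [mul_pow, div_pow]; ring
          have h1 : (T⁻¹ * P) ^ 2 ≤ ((s / T) * P) ^ 2 := by
            rw [e1, e2]
            apply div_le_div_of_nonneg_right ?_ (by positivity)
            · nlinarith [sq_nonneg P]
          simp only [hE]
          simp only [← hT, ← hP]
          linarith
        · rw [hβ]
          set P := pd 0 v (hypPt s x) with hP
          set Db := dbar b v (hypPt s x) with hDb
          have hdb : pd b.succ v (hypPt s x) = Db - (x b / T) * P := by
            rw [hDb]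
            show _ = ((hypPt s x b.succ / hypPt s x 0) * pd 0 v (hypPt s x)
              + pd b.succ v (hypPt s x)) - (x b / T) * P
            rw [hypPt_succ, ← hT, ← hP]
            ring
          rw [hdb]
          have hxb : (x b) ^ 2 ≤ T ^ 2 := by
            rw [hT2]
            have h1 : (x b) ^ 2 ≤ ∑ a : Fin 3, (x a) ^ 2 :=
              Finset.single_le_sum (fun a _ => sq_nonneg (x a)) (Finset.mem_univ b)
            nlinarith [sq_nonneg s]
          have hT4 : (0:ℝ) < T ^ 4 := by positivity
          have e1 : (T⁻¹ * (Db - (x b / T) * P)) ^ 2 = (T * Db - x b * P) ^ 2 / T ^ 4 := by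
            field_simp
          have expand : (2 * Db ^ 2 + 2 * ((s / T) * P) ^ 2) * T ^ 4
              = 2 * Db ^ 2 * T ^ 4 + 2 * s ^ 2 * P ^ 2 * T ^ 2 := by
            field_simp
          have key : (T⁻¹ * (Db - (x b / T) * P)) ^ 2
              ≤ 2 * Db ^ 2 + 2 * ((s / T) * P) ^ 2 := by
            rw [e1, div_le_iff₀ hT4, expand]
            nlinarith [sq_nonneg (T * Db + x b * P), sq_nonneg (T * Db - x b * P),
              sq_nonneg P, sq_nonneg Db,
              mul_le_mul_of_nonneg_left hxb (sq_nonneg P),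
              mul_nonneg (mul_nonneg (sq_nonneg T) (sq_nonneg P))
                (sub_nonneg.2 (by nlinarith : (1:ℝ) ≤ s ^ 2)),
              mul_nonneg (mul_nonneg (sq_nonneg T) (sq_nonneg Db))
                (sub_nonneg.2 (by nlinarith : (1:ℝ) ≤ T ^ 2))]
          have hDbsum : Db ^ 2 ≤ ∑ a : Fin 3, (dbar a v (hypPt s x)) ^ 2 :=
            Finset.single_le_sum (f := fun a : Fin 3 => (dbar a v (hypPt s x)) ^ 2)
              (fun a _ => sq_nonneg _) (Finset.mem_univ b)
          simp only [hE]
          simp only [← hT, ← hP]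
          linarith
    · set a : Fin 3 := ⟨(I 0 : ℕ) - 4, by have := (I 0).isLt; omega⟩ with ha2
      have hZ : Zf (I 0) v = boost a v := dif_neg hc
      rw [hofn, hZ]
      have hp : hypPt s x 0 ≠ 0 := t_ne_zero hs x
      have heq : ((hypPt s x 0)⁻¹ * boost a v (hypPt s x)) ^ 2
          = (dbar a v (hypPt s x)) ^ 2 := by
        unfold boost dbar
        field_simp
      rw [heq]
      have hsum : (dbar a v (hypPt s x)) ^ 2 ≤ ∑ b : Fin 3, (dbar b v (hypPt s x)) ^ 2 :=
        Finset.single_le_sum (f := fun b : Fin 3 => (dbar b v (hypPt s x)) ^ 2)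
          (fun b _ => sq_nonneg _) (Finset.mem_univ a)
      simp only [hE]
      linarith
  calc (∫ x : Fin 3 → ℝ, ((hypPt s x 0)⁻¹ * ZIter (List.ofFn I) u (hypPt s x)) ^ 2)
      ≤ ∫ x : Fin 3 → ℝ, 2 * E x := by
        apply integral_mono_of_nonneg (Filter.Eventually.of_forall fun x => sq_nonneg _)
          (hEint.const_mul 2) (Filter.Eventually.of_forall hpt)
    _ = 2 * EmD D s v := by rw [integral_const_mul, hEm]
    _ ≤ 2 * ∑ m' ∈ Finset.range (m + 1), ∑ J : Fin m' → Fin 7,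
          EmD D s (ZIter (List.ofFn J) u) := by
        apply mul_le_mul_of_nonneg_left _ (by norm_num : (0:ℝ) ≤ 2)
        calc EmD D s v
            ≤ ∑ J : Fin m → Fin 7, EmD D s (ZIter (List.ofFn J) u) :=
              Finset.single_le_sum (f := fun J : Fin m → Fin 7 =>
                  EmD D s (ZIter (List.ofFn J) u))
                (fun J _ => EmD_nonneg D s _) (Finset.mem_univ (fun k : Fin m => I k.succ))
          _ ≤ _ :=
              Finset.single_le_sum (f := fun m' => ∑ J : Fin m' → Fin 7,
                  EmD D s (ZIter (List.ofFn J) u))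
                (fun m' _ => Finset.sum_nonneg fun J _ => EmD_nonneg D s _)
                (Finset.mem_range.2 (Nat.lt_succ_self m))

/-- Hardy-type `L²` estimates for `t⁻¹ Z^I u` and `(s/t) Z^I u` on hyperboloids
(`|I| = m + 1 ≥ 1`): if `Z^I` contains a translation then `(s/t)Z^I u` is
controlled by lower-order `(s/t)∂ Z^J u`; if it consists only of boosts then
`t⁻¹ Z^I u` is controlled by lower-order `∂̄ Z^J u`; in either case `t⁻¹ Z^I u`
is controlled by the lower-order energies. -/
theorem L2_estimates_of_ZI (m : ℕ) :
    ∃ C > (0 : ℝ), ∀ u : (Fin 4 → ℝ) → ℝ, ContDiff ℝ (⊤ : ℕ∞) u →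
      (∀ p : Fin 4 → ℝ,
        ¬ Real.sqrt (∑ a : Fin 3, (p a.succ) ^ 2) ≤ p 0 - 1 → u p = 0) →
      ∀ (s : ℝ), 0 < s → ∀ (D : ℝ), 0 ≤ D → ∀ I : Fin (m + 1) → Fin 7,
        ((∃ k : Fin (m + 1), ((I k : ℕ) < 4)) →
          (∫ x : Fin 3 → ℝ,
              ((s / hypPt s x 0) * ZIter (List.ofFn I) u (hypPt s x)) ^ 2)
            ≤ C * ∑ m' ∈ Finset.range (m + 1), ∑ J : Fin m' → Fin 7, ∑ β : Fin 4,
                ∫ x : Fin 3 → ℝ,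
                  ((s / hypPt s x 0) * pd β (ZIter (List.ofFn J) u) (hypPt s x)) ^ 2) ∧
        ((∀ k : Fin (m + 1), 4 ≤ (I k : ℕ)) →
          (∫ x : Fin 3 → ℝ,
              ((hypPt s x 0)⁻¹ * ZIter (List.ofFn I) u (hypPt s x)) ^ 2)
            ≤ C * ∑ m' ∈ Finset.range (m + 1), ∑ J : Fin m' → Fin 7, ∑ b : Fin 3,
                ∫ x : Fin 3 → ℝ,
                  (dbar b (ZIter (List.ofFn J) u) (hypPt s x)) ^ 2) ∧
        (∫ x : Fin 3 → ℝ,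
            ((hypPt s x 0)⁻¹ * ZIter (List.ofFn I) u (hypPt s x)) ^ 2)
          ≤ C * ∑ m' ∈ Finset.range (m + 1), ∑ J : Fin m' → Fin 7,
              EmD D s (ZIter (List.ofFn J) u) := by
  choose C1 hC1pos hC1 using fun I => part1_aux m I
  have hsum0 : 0 ≤ ∑ I : Fin (m+1) → Fin 7, C1 I :=
    Finset.sum_nonneg fun I _ => (hC1pos I).le
  refine ⟨2 + ∑ I : Fin (m+1) → Fin 7, C1 I, by linarith, ?_⟩
  intro u hu hsupp s hs D hD I
  have hu0 : ∀ p ∈ Uset, u p = 0 := fun p hp => hsupp p (not_le.2 hp)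
  have hCI : C1 I ≤ 2 + ∑ I' : Fin (m+1) → Fin 7, C1 I' := by
    have h := Finset.single_le_sum (f := C1) (fun i _ => (hC1pos i).le) (Finset.mem_univ I)
    linarith
  refine ⟨?_, ?_, ?_⟩
  · intro hex
    have h := hC1 I u hu hu0 s hs hex
    have hRnn : 0 ≤ ∑ m' ∈ Finset.range (m + 1), ∑ J : Fin m' → Fin 7, ∑ β : Fin 4,
        ∫ x : Fin 3 → ℝ,
          ((s / hypPt s x 0) * pd β (ZIter (List.ofFn J) u) (hypPt s x)) ^ 2 :=
      Finset.sum_nonneg fun m' _ => Finset.sum_nonneg fun J _ =>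
        Finset.sum_nonneg fun β _ => integral_nonneg fun x => sq_nonneg _
    exact le_trans h (mul_le_mul_of_nonneg_right hCI hRnn)
  · intro hall
    have h := part2_aux m I u s hs hall
    have hRnn : 0 ≤ ∑ m' ∈ Finset.range (m + 1), ∑ J : Fin m' → Fin 7, ∑ b : Fin 3,
        ∫ x : Fin 3 → ℝ, (dbar b (ZIter (List.ofFn J) u) (hypPt s x)) ^ 2 :=
      Finset.sum_nonneg fun m' _ => Finset.sum_nonneg fun J _ =>
        Finset.sum_nonneg fun b _ => integral_nonneg fun x => sq_nonneg _
    calc (∫ x : Fin 3 → ℝ, ((hypPt s x 0)⁻¹ * ZIter (List.ofFn I) u (hypPt s x)) ^ 2)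
        ≤ 1 * (∑ m' ∈ Finset.range (m + 1), ∑ J : Fin m' → Fin 7, ∑ b : Fin 3,
            ∫ x : Fin 3 → ℝ, (dbar b (ZIter (List.ofFn J) u) (hypPt s x)) ^ 2) := by
          rw [one_mul]; exact h
      _ ≤ _ := mul_le_mul_of_nonneg_right (by linarith) hRnn
  · have h := part3_aux m I u hu hu0 s hs D
    have hRnn : 0 ≤ ∑ m' ∈ Finset.range (m + 1), ∑ J : Fin m' → Fin 7,
        EmD D s (ZIter (List.ofFn J) u) :=
      Finset.sum_nonneg fun m' _ => Finset.sum_nonneg fun J _ => EmD_nonneg D s _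
    exact le_trans h (mul_le_mul_of_nonneg_right (by linarith) hRnn)
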